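/- arXiv:1607.08013 — 3 statements merged into one kernel-verified Lean document; each statement's English description precedes it below -/
import Mathlib

section
/- Let μ_n (n ∈ ℕ) and μ be Borel probability measures on ℝ such that every polynomial with real coefficients is integrable with respect to each μ_n and with respect to μ. Suppose (1) for every polynomial p ∈ ℝ[x], lim_{n→∞} ∫ p dμ_n = ∫ p dμ, and (2) μ is characterized by its moments, i.e., any Borel probability measure ν on ℝ for which all polynomials are integrable and which satisfies ∫ x^k dν = ∫ x^k dμ for all k ∈ ℕ must equal μ. Then μ_n converges weakly to μ. -/
/-!
Convergence of the moments bounds the second moments uniformly, so by Chebyshev the sequence is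
tight and, by Prokhorov, relatively compact for weak convergence. Let `ν` be the weak limit of a
subsequence. A bound on the `2k`-th moments lets one replace `x ^ k` by its truncation at level
`a` with an error `O(1 / a)` uniformly along the subsequence and for `ν`, so the moments pass to
the limit: `ν` has the moments of `μ`, hence `ν = μ`. Being the only cluster point in a compact
set, `μ` is the weak limit of the whole sequence.
-/

open MeasureTheory Filter Set Topology
open scoped BoundedContinuousFunction

lemma isTightMeasureSet_range_of_integral_norm_sq_le {ι E : Type*} [NormedAddCommGroup E]
    [ProperSpace E] [MeasurableSpace E] {μ : ι → Measure E} [∀ i, IsFiniteMeasure (μ i)] {M : ℝ}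
    (hint : ∀ i, Integrable (fun x => ‖x‖ ^ 2) (μ i)) (hM : ∀ i, ∫ x, ‖x‖ ^ 2 ∂(μ i) ≤ M) :
    IsTightMeasureSet (range μ) := by
  have hchebyshev : ∀ r : ℝ, 0 < r → ∀ i, μ i {x | r < ‖x‖} ≤ ENNReal.ofReal (M / r ^ 2) := by
    intro r hr i
    have hsub : {x : E | r < ‖x‖} ⊆ {x | r ^ 2 ≤ ‖x‖ ^ 2} := fun x hx =>
      pow_le_pow_left₀ hr.le hx.le 2
    rw [← ofReal_measureReal]
    refine ENNReal.ofReal_le_ofReal ?_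
    rw [le_div_iff₀' (by positivity)]
    calc r ^ 2 * (μ i).real {x | r < ‖x‖} ≤ r ^ 2 * (μ i).real {x | r ^ 2 ≤ ‖x‖ ^ 2} :=
          mul_le_mul_of_nonneg_left (measureReal_mono hsub) (by positivity)
      _ ≤ ∫ x, ‖x‖ ^ 2 ∂(μ i) :=
          mul_meas_ge_le_integral_of_nonneg (Eventually.of_forall fun x => by positivity)
            (hint i) _
      _ ≤ M := hM i
  have hbound_lim : Tendsto (fun r : ℝ => ENNReal.ofReal (M / r ^ 2)) atTop (𝓝 0) := by
    simpa using ENNReal.tendsto_ofReal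
      (tendsto_const_nhds.div_atTop (tendsto_pow_atTop two_ne_zero))
  refine isTightMeasureSet_of_tendsto_measure_norm_gt (tendsto_of_tendsto_of_tendsto_of_le_of_le'
    tendsto_const_nhds hbound_lim (Eventually.of_forall fun _ => bot_le) ?_)
  filter_upwards [eventually_gt_atTop 0] with r hr
  exact iSup₂_le fun _ ⟨i, hi⟩ => hi ▸ hchebyshev r hr i

lemma integrable_and_integral_le_of_tendsto {X : Type*} [MeasurableSpace X]
    [TopologicalSpace X] [OpensMeasurableSpace X] [HasOuterApproxClosed X]
    {ν : ℕ → ProbabilityMeasure X} {ν₀ : ProbabilityMeasure X} (hν : Tendsto ν atTop (𝓝 ν₀))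
    {f : X → ℝ} (hf : Continuous f) (hf₀ : 0 ≤ f) {M : ℝ}
    (hint : ∀ n, Integrable f (ν n : Measure X)) (hM : ∀ n, ∫ x, f x ∂(ν n : Measure X) ≤ M) :
    Integrable f (ν₀ : Measure X) ∧ ∫ x, f x ∂(ν₀ : Measure X) ≤ M := by
  have hM₀ : 0 ≤ M := (integral_nonneg hf₀).trans (hM 0)
  have hlintegral : ∫⁻ x, ENNReal.ofReal (f x) ∂ν₀ ≤ ENNReal.ofReal M := by
    refine (lintegral_le_liminf_lintegral_of_forall_isOpen_measure_le_liminf_measure hf hf₀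
      fun G hG => ProbabilityMeasure.le_liminf_measure_open_of_tendsto hν hG).trans
      (liminf_le_of_frequently_le' (Frequently.of_forall fun n => ?_))
    rw [← ofReal_integral_eq_lintegral_ofReal (hint n) (Eventually.of_forall hf₀)]
    exact ENNReal.ofReal_le_ofReal (hM n)
  have hmeas : AEStronglyMeasurable f ν₀ := hf.aestronglyMeasurable
  refine ⟨⟨hmeas, ?_⟩, ?_⟩
  · rw [hasFiniteIntegral_iff_ofReal (Eventually.of_forall hf₀)]
    exact hlintegral.trans_lt ENNReal.ofReal_lt_top
  · rw [integral_eq_lintegral_of_nonneg_ae (Eventually.of_forall hf₀) hmeas]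
    exact ENNReal.toReal_le_of_le_ofReal hM₀ hlintegral

lemma integrable_pow_of_integrable_pow_two_mul {κ : Measure ℝ} [IsFiniteMeasure κ] {k : ℕ}
    (h : Integrable (fun x => x ^ (2 * k)) κ) : Integrable (fun x => x ^ k) κ := by
  refine ((memLp_two_iff_integrable_sq (by fun_prop)).2 ?_).integrable one_le_two
  simpa only [← pow_mul, mul_comm k 2] using h

lemma integrable_eval_of_forall_integrable_pow {κ : Measure ℝ}
    (h : ∀ k : ℕ, Integrable (fun x => x ^ k) κ) (p : Polynomial ℝ) :
    Integrable (fun x => p.eval x) κ := by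
  induction p using Polynomial.induction_on' with
  | add p q hp hq => simp only [Polynomial.eval_add]; exact hp.add hq
  | monomial n a => simpa using (h n).const_mul a

lemma abs_max_neg_min_le (a x : ℝ) : |max (-a) (min x a)| ≤ |a| :=
  abs_le.2 ⟨(neg_le_neg (le_abs_self a)).trans (le_max_left _ _),
    max_le (neg_le_abs a) ((min_le_right _ _).trans (le_abs_self a))⟩

noncomputable def truncPow (k : ℕ) (a : ℝ) : ℝ →ᵇ ℝ :=
  BoundedContinuousFunction.ofNormedAddCommGroup (fun x => (max (-a) (min x a)) ^ k)
    ((continuous_const.max (continuous_id.min continuous_const)).pow k) (|a| ^ k) fun x => by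
      rw [norm_pow, Real.norm_eq_abs]
      exact pow_le_pow_left₀ (abs_nonneg _) (abs_max_neg_min_le a x) k

lemma truncPow_apply (k : ℕ) (a x : ℝ) : truncPow k a x = (max (-a) (min x a)) ^ k := rfl

lemma abs_pow_sub_truncPow_le (k : ℕ) {a : ℝ} (ha : 1 ≤ a) (x : ℝ) :
    |x ^ k - truncPow k a x| ≤ 2 * x ^ (2 * k) / a := by
  have hx2k : x ^ (2 * k) = |x| ^ k * |x| ^ k := by
    rw [two_mul, pow_add, ← abs_pow, ← abs_mul_abs_self (x ^ k), abs_pow]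
  rw [truncPow_apply, hx2k]
  rcases le_or_gt |x| a with hxa | hxa
  · rw [min_eq_left (abs_le.1 hxa).2, max_eq_right (abs_le.1 hxa).1, sub_self, abs_zero]
    positivity
  rcases Nat.eq_zero_or_pos k with rfl | hk
  · simp only [pow_zero, sub_self, abs_zero, mul_one]
    positivity
  have hclamp : |max (-a) (min x a) ^ k| ≤ |x| ^ k := by
    rw [abs_pow]
    refine pow_le_pow_left₀ (abs_nonneg _) ?_ k
    linarith [abs_max_neg_min_le a x, abs_of_pos (zero_lt_one.trans_le ha)]
  have hdiff : |x ^ k - max (-a) (min x a) ^ k| ≤ 2 * |x| ^ k := by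
    linarith [abs_sub (x ^ k) (max (-a) (min x a) ^ k), abs_pow x k]
  have hxk : a ≤ |x| ^ k := hxa.le.trans (le_self_pow₀ (ha.trans hxa.le) hk.ne')
  rw [le_div_iff₀ (by positivity), ← mul_assoc]
  gcongr

lemma abs_integral_pow_sub_integral_truncPow_le {κ : Measure ℝ} [IsFiniteMeasure κ] {k : ℕ}
    {a : ℝ} (ha : 1 ≤ a) (h : Integrable (fun x => x ^ (2 * k)) κ) :
    |∫ x, x ^ k ∂κ - ∫ x, truncPow k a x ∂κ| ≤ 2 * (∫ x, x ^ (2 * k) ∂κ) / a := by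
  have hk : Integrable (fun x => x ^ k) κ := integrable_pow_of_integrable_pow_two_mul h
  have htrunc : Integrable (fun x => truncPow k a x) κ := (truncPow k a).integrable κ
  rw [← integral_sub hk htrunc, mul_div_assoc, ← integral_div, ← integral_const_mul]
  refine abs_integral_le_integral_abs.trans
    (integral_mono (hk.sub htrunc).abs ((h.div_const a).const_mul 2) fun x => ?_)
  simpa only [mul_div_assoc] using abs_pow_sub_truncPow_le k ha x

lemma tendsto_integral_pow_of_tendsto {ν : ℕ → ProbabilityMeasure ℝ}
    {ν₀ : ProbabilityMeasure ℝ} (hν : Tendsto ν atTop (𝓝 ν₀)) {k : ℕ} {M : ℝ}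
    (hint : ∀ n, Integrable (fun x => x ^ (2 * k)) (ν n : Measure ℝ))
    (hM : ∀ n, ∫ x, x ^ (2 * k) ∂(ν n : Measure ℝ) ≤ M) :
    Tendsto (fun n => ∫ x, x ^ k ∂(ν n : Measure ℝ)) atTop
      (𝓝 (∫ x, x ^ k ∂(ν₀ : Measure ℝ))) := by
  obtain ⟨hint₀, hM₀⟩ := integrable_and_integral_le_of_tendsto hν (continuous_pow _)
    (fun x => (even_two_mul k).pow_nonneg x) hint hM
  have hbound : ∀ᶠ a in atTop, ∀ κ : ProbabilityMeasure ℝ,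
      Integrable (fun x => x ^ (2 * k)) (κ : Measure ℝ) → ∫ x, x ^ (2 * k) ∂κ ≤ M →
      dist (∫ x, x ^ k ∂(κ : Measure ℝ)) (∫ x, truncPow k a x ∂(κ : Measure ℝ))
        ≤ 2 * M / a := by
    filter_upwards [eventually_ge_atTop 1] with a ha κ hκ hκM
    rw [Real.dist_eq]
    exact (abs_integral_pow_sub_integral_truncPow_le ha hκ).trans (by gcongr)
  have hbound_lim : Tendsto (fun a : ℝ => 2 * M / a) atTop (𝓝 0) :=
    tendsto_const_nhds.div_atTop tendsto_id
  refine TendstoUniformly.tendsto_of_eventually_tendsto (p := (atTop : Filter ℝ))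
    (F := fun a n => ∫ x, truncPow k a x ∂(ν n : Measure ℝ))
    (L := fun a => ∫ x, truncPow k a x ∂(ν₀ : Measure ℝ)) ?_
    (Eventually.of_forall fun a => ProbabilityMeasure.tendsto_iff_forall_integral_tendsto.1 hν _)
    ?_
  · rw [Metric.tendstoUniformly_iff]
    intro ε hε
    filter_upwards [hbound, hbound_lim.eventually (gt_mem_nhds hε)] with a ha haε n
    exact (ha (ν n) (hint n) (hM n)).trans_lt haε
  · refine tendsto_iff_dist_tendsto_zero.2
      (squeeze_zero' (Eventually.of_forall fun _ => dist_nonneg) ?_ hbound_lim)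
    filter_upwards [hbound] with a ha
    rw [dist_comm]
    exact ha ν₀ hint₀ hM₀

lemma integrable_pow_and_integral_pow_eq_of_tendsto {ν : ℕ → ProbabilityMeasure ℝ}
    {ν₀ : ProbabilityMeasure ℝ} (hν : Tendsto ν atTop (𝓝 ν₀)) {m : ℕ → ℝ}
    (hint : ∀ n k, Integrable (fun x => x ^ k) (ν n : Measure ℝ))
    (hm : ∀ k, Tendsto (fun n => ∫ x, x ^ k ∂(ν n : Measure ℝ)) atTop (𝓝 (m k))) (k : ℕ) :
    Integrable (fun x => x ^ k) (ν₀ : Measure ℝ) ∧ ∫ x, x ^ k ∂(ν₀ : Measure ℝ) = m k := by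
  obtain ⟨M, hM⟩ := (hm (2 * k)).bddAbove_range
  have hM' : ∀ n, ∫ x, x ^ (2 * k) ∂(ν n : Measure ℝ) ≤ M := fun n => hM (mem_range_self n)
  refine ⟨integrable_pow_of_integrable_pow_two_mul ?_, tendsto_nhds_unique
    (tendsto_integral_pow_of_tendsto hν (fun n => hint n _) hM') (hm k)⟩
  exact (integrable_and_integral_le_of_tendsto hν (continuous_pow _)
    (fun x => (even_two_mul k).pow_nonneg x) (fun n => hint n _) hM').1

theorem stmt4_general (μs : ℕ → Measure ℝ) (μ : Measure ℝ)
    [∀ n, IsProbabilityMeasure (μs n)] [IsProbabilityMeasure μ]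
    (hint_n : ∀ n, ∀ p : Polynomial ℝ, Integrable (fun x => p.eval x) (μs n))
    (h1 : ∀ p : Polynomial ℝ,
      Tendsto (fun n => ∫ x, p.eval x ∂ μs n) atTop (nhds (∫ x, p.eval x ∂μ)))
    (h2 : ∀ ν : Measure ℝ, IsProbabilityMeasure ν →
      (∀ p : Polynomial ℝ, Integrable (fun x => p.eval x) ν) →
      (∀ k : ℕ, ∫ x, x ^ k ∂ν = ∫ x, x ^ k ∂μ) → ν = μ) :
    ∀ f : BoundedContinuousFunction ℝ ℝ,
      Tendsto (fun n => ∫ x, f x ∂ μs n) atTop (nhds (∫ x, f x ∂μ)) := by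
  have hpow_int : ∀ n k, Integrable (fun x : ℝ => x ^ k) (μs n) := fun n k => by
    simpa using hint_n n (Polynomial.X ^ k)
  have hmom : ∀ k, Tendsto (fun n => ∫ x, x ^ k ∂μs n) atTop (𝓝 (∫ x, x ^ k ∂μ)) := fun k => by
    simpa using h1 (Polynomial.X ^ k)
  let P : ℕ → ProbabilityMeasure ℝ := fun n => ⟨μs n, inferInstance⟩
  suffices Tendsto P atTop (𝓝 ⟨μ, inferInstance⟩) from
    ProbabilityMeasure.tendsto_iff_forall_integral_tendsto.1 this
  obtain ⟨M, hM⟩ := (hmom 2).bddAbove_range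
  have htight : IsTightMeasureSet {(ν : Measure ℝ) | ν ∈ range P} := by
    rw [← image, ← range_comp]
    exact isTightMeasureSet_range_of_integral_norm_sq_le (μ := μs)
      (by simpa only [Real.norm_eq_abs, sq_abs] using fun n => hpow_int n 2)
      (by simpa only [Real.norm_eq_abs, sq_abs] using fun n => hM (mem_range_self n))
  refine (isCompact_closure_of_isTightMeasureSet htight).tendsto_nhds_of_unique_mapClusterPt
    (Eventually.of_forall fun n => subset_closure (mem_range_self n)) fun ν _ hν => ?_
  obtain ⟨φ, hφ, hPφ⟩ := hν.tendsto_subseq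
  have hν_mom := integrable_pow_and_integral_pow_eq_of_tendsto hPφ (fun n k => hpow_int (φ n) k)
    fun k => (hmom k).comp hφ.tendsto_atTop
  exact Subtype.ext (h2 ν ν.prop (integrable_eval_of_forall_integrable_pow fun k => (hν_mom k).1)
    fun k => (hν_mom k).2)

/-- If all polynomials are integrable w.r.t. the probability measures
`μ_n` and `μ`, the integrals of every polynomial converge, and `μ` is characterized by
its moments, then `μ_n` converges weakly to `μ`. -/
theorem stmt4 (μs : ℕ → Measure ℝ) (μ : Measure ℝ)
    [∀ n, IsProbabilityMeasure (μs n)] [IsProbabilityMeasure μ]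
    (hint_n : ∀ n, ∀ p : Polynomial ℝ, Integrable (fun x => p.eval x) (μs n))
    (hint : ∀ p : Polynomial ℝ, Integrable (fun x => p.eval x) μ)
    (h1 : ∀ p : Polynomial ℝ,
      Tendsto (fun n => ∫ x, p.eval x ∂ μs n) atTop (nhds (∫ x, p.eval x ∂μ)))
    (h2 : ∀ ν : Measure ℝ, IsProbabilityMeasure ν →
      (∀ p : Polynomial ℝ, Integrable (fun x => p.eval x) ν) →
      (∀ k : ℕ, ∫ x, x ^ k ∂ν = ∫ x, x ^ k ∂μ) → ν = μ) :
    ∀ f : BoundedContinuousFunction ℝ ℝ,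
      Tendsto (fun n => ∫ x, f x ∂ μs n) atTop (nhds (∫ x, f x ∂μ)) :=
  stmt4_general μs μ hint_n h1 h2
end

section
/- Let V be a countable type and L : V → V → ℂ a function satisfying the self-involutive condition L(u, v) = conj(L(v, u)) for all u, v ∈ V, and suppose there is a constant C such that for every u ∈ V the family (L(u, v))_{v ∈ V} is summable with ∑_v |L(u, v)| ≤ C. Then there exists a bounded linear operator M : ℓ²(V; ℂ) → ℓ²(V; ℂ) which is self-adjoint and satisfies ⟨M δ_x, δ_y⟩ = L(x, y) for all x, y ∈ V, where δ_x denotes the standard basis vector of ℓ²(V; ℂ) supported at x. (This is the Markov-type operator M(f)(u) = ∑_{w} L(w, u) f(w) associated to a self-involutive labelled graph with uniformly ℓ¹-bounded labelled degrees.) -/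
/-!
Let `(M f) u = ∑' w, L w u * f w`. Boundedness is the Schur test: Cauchy–Schwarz against the
weights `‖L w u‖` gives `‖(M f) u‖² ≤ C ∑' w, ‖L w u‖ ‖f w‖²`, and summing over `u` after
exchanging the order of summation gives `‖M f‖² ≤ C² ‖f‖²`. The matrix of `M` in the basis
`δ_x` is `L`, which is hermitian by the self-involutive condition; since a bounded operator on
`ℓ²` is determined by its values on the basis vectors, `M` coincides with its adjoint.
-/

open MeasureTheory
open scoped ENNReal InnerProductSpace ComplexConjugate

theorem sq_tsum_mul_le_tsum_mul_tsum_mul_sq {ι : Type*} {a b : ι → ℝ} (ha : ∀ i, 0 ≤ a i)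
    (hsa : Summable a) (hsab : Summable fun i => a i * b i ^ 2) :
    (∑' i, a i * b i) ^ 2 ≤ (∑' i, a i) * ∑' i, a i * b i ^ 2 := by
  have hab : Summable fun i => a i * b i := by
    refine .of_norm_bounded ((hsa.add hsab).div_const 2) fun i => ?_
    rw [norm_mul, Real.norm_of_nonneg (ha i), Real.norm_eq_abs, ← sq_abs (b i)]
    nlinarith [mul_nonneg (ha i) (sq_nonneg (|b i| - 1))]
  refine le_of_tendsto_of_tendsto' (hab.hasSum.pow 2) (Filter.Tendsto.mul hsa.hasSum hsab.hasSum) fun s => ?_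
  exact Finset.sum_sq_le_sum_mul_sum_of_sq_le_mul s (fun i _ => ha i)
    (fun i _ => mul_nonneg (ha i) (sq_nonneg _)) fun i _ => le_of_eq (by ring)

theorem summable_tsum_mul_and_tsum_tsum_mul_le {ι κ : Type*} {k : ι → κ → ℝ} {w : κ → ℝ}
    {B : ℝ} (hk : ∀ i j, 0 ≤ k i j) (hw : ∀ j, 0 ≤ w j) (hsw : Summable w)
    (hcol : ∀ j, Summable fun i => k i j) (hB : ∀ j, ∑' i, k i j ≤ B) :
    Summable (fun i => ∑' j, k i j * w j) ∧ ∑' i, ∑' j, k i j * w j ≤ B * ∑' j, w j := by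
  have hcol_bd : ∀ j, ∑' i, k i j * w j ≤ B * w j := fun j => by
    rw [tsum_mul_right]
    exact mul_le_mul_of_nonneg_right (hB j) (hw j)
  have hsum : Summable fun p : κ × ι => k p.2 p.1 * w p.1 := by
    refine (summable_prod_of_nonneg fun p => mul_nonneg (hk p.2 p.1) (hw p.1)).2 ⟨?_, ?_⟩
    · exact fun j => (hcol j).mul_right (w j)
    · exact (hsw.mul_left B).of_nonneg_of_le
        (fun j => tsum_nonneg fun i => mul_nonneg (hk i j) (hw j)) hcol_bd
  refine ⟨hsum.prod_symm.prod, ?_⟩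
  calc ∑' i, ∑' j, k i j * w j = ∑' j, ∑' i, k i j * w j :=
        Summable.tsum_comm (f := fun j i => k i j * w j) hsum
    _ ≤ ∑' j, B * w j := hsum.prod.tsum_le_tsum hcol_bd (hsw.mul_left B)
    _ = B * ∑' j, w j := tsum_mul_left

theorem Summable.mul_lp {ι 𝕜 : Type*} [RCLike 𝕜] {p : ℝ≥0∞} {a : ι → 𝕜} (hp : p ≠ 0)
    (ha : Summable fun i => ‖a i‖) (f : lp (fun _ : ι => 𝕜) p) :
    Summable fun i => a i * f i :=
  .of_norm_bounded (ha.mul_right ‖f‖) fun i => by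
    rw [norm_mul]
    exact mul_le_mul_of_nonneg_left (lp.norm_apply_le_norm hp f i) (norm_nonneg _)

section LpTwo

variable {ι : Type*} {E : ι → Type*} [∀ i, NormedAddCommGroup (E i)]

theorem lp.summable_norm_sq (f : lp E 2) : Summable fun i => ‖f i‖ ^ 2 := by
  exact_mod_cast (lp.memℓp f).summable (by norm_num : 0 < (2 : ℝ≥0∞).toReal)

theorem lp.norm_sq_eq_tsum (f : lp E 2) : ‖f‖ ^ 2 = ∑' i, ‖f i‖ ^ 2 := by
  exact_mod_cast lp.norm_rpow_eq_tsum (by norm_num : 0 < (2 : ℝ≥0∞).toReal) f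

theorem memℓp_two_of_summable_norm_sq {f : ∀ i, E i} (hf : Summable fun i => ‖f i‖ ^ 2) :
    Memℓp f 2 :=
  memℓp_gen (by exact_mod_cast hf)

end LpTwo

theorem lp.inner_single_one_left {ι 𝕜 : Type*} [RCLike 𝕜] [DecidableEq ι] (i : ι)
    (f : lp (fun _ : ι => 𝕜) 2) : ⟪lp.single 2 i (1 : 𝕜), f⟫_𝕜 = f i := by
  simp [lp.inner_single_left]

section SchurTest

variable {ι κ 𝕜 : Type*} [RCLike 𝕜] {K : ι → κ → 𝕜} {A B : ℝ}

theorem norm_tsum_mul_lp_two_sq_le {i : ι} (hrow : Summable fun j => ‖K i j‖)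
    (hA : ∑' j, ‖K i j‖ ≤ A) (f : lp (fun _ : κ => 𝕜) 2) :
    ‖∑' j, K i j * f j‖ ^ 2 ≤ A * ∑' j, ‖K i j‖ * ‖f j‖ ^ 2 := by
  have hsq : Summable fun j => ‖K i j‖ * ‖f j‖ ^ 2 :=
    .of_nonneg_of_le (fun j => by positivity)
      (fun j => mul_le_mul_of_nonneg_left
        (pow_le_pow_left₀ (norm_nonneg _) (lp.norm_apply_le_norm two_ne_zero f j) 2)
        (norm_nonneg _)) (hrow.mul_right (‖f‖ ^ 2))
  calc ‖∑' j, K i j * f j‖ ^ 2 ≤ (∑' j, ‖K i j‖ * ‖f j‖) ^ 2 := by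
        gcongr
        simpa only [norm_mul] using norm_tsum_le_tsum_norm (hrow.mul_lp two_ne_zero f).norm
    _ ≤ (∑' j, ‖K i j‖) * ∑' j, ‖K i j‖ * ‖f j‖ ^ 2 :=
        sq_tsum_mul_le_tsum_mul_tsum_mul_sq (fun j => norm_nonneg _) hrow hsq
    _ ≤ A * ∑' j, ‖K i j‖ * ‖f j‖ ^ 2 := by gcongr

theorem summable_and_tsum_norm_tsum_mul_lp_two_sq_le (hA0 : 0 ≤ A)
    (hrow : ∀ i, Summable fun j => ‖K i j‖) (hA : ∀ i, ∑' j, ‖K i j‖ ≤ A)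
    (hcol : ∀ j, Summable fun i => ‖K i j‖) (hB : ∀ j, ∑' i, ‖K i j‖ ≤ B)
    (f : lp (fun _ : κ => 𝕜) 2) :
    Summable (fun i => ‖∑' j, K i j * f j‖ ^ 2) ∧
      ∑' i, ‖∑' j, K i j * f j‖ ^ 2 ≤ A * B * ‖f‖ ^ 2 := by
  obtain ⟨hsum, hle⟩ := summable_tsum_mul_and_tsum_tsum_mul_le
    (fun i j => norm_nonneg (K i j)) (fun j => sq_nonneg ‖f j‖) (lp.summable_norm_sq f) hcol hB
  have hpt i := norm_tsum_mul_lp_two_sq_le (hrow i) (hA i) f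
  have hsumT := Summable.of_nonneg_of_le (fun i => sq_nonneg _) hpt (hsum.mul_left A)
  refine ⟨hsumT, ?_⟩
  calc ∑' i, ‖∑' j, K i j * f j‖ ^ 2 ≤ ∑' i, A * ∑' j, ‖K i j‖ * ‖f j‖ ^ 2 :=
        hsumT.tsum_le_tsum hpt (hsum.mul_left A)
    _ ≤ A * (B * ‖f‖ ^ 2) := by
        rw [tsum_mul_left, lp.norm_sq_eq_tsum]
        exact mul_le_mul_of_nonneg_left hle hA0
    _ = A * B * ‖f‖ ^ 2 := by ring

/-- **Schur test** -/
theorem exists_lp_two_clm_apply_eq_tsum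
    (hrow : ∀ i, Summable fun j => ‖K i j‖) (hA : ∀ i, ∑' j, ‖K i j‖ ≤ A)
    (hcol : ∀ j, Summable fun i => ‖K i j‖) (hB : ∀ j, ∑' i, ‖K i j‖ ≤ B) :
    ∃ T : lp (fun _ : κ => 𝕜) 2 →L[𝕜] lp (fun _ : ι => 𝕜) 2,
      ∀ f i, T f i = ∑' j, K i j * f j := by
  -- `A` may be negative only when `ι` is empty
  have hA' i : ∑' j, ‖K i j‖ ≤ max A 0 := (hA i).trans (le_max_left A 0)
  have hbound f :=
    summable_and_tsum_norm_tsum_mul_lp_two_sq_le (le_max_right A 0) hrow hA' hcol hB f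
  let T : lp (fun _ : κ => 𝕜) 2 →ₗ[𝕜] lp (fun _ : ι => 𝕜) 2 :=
    { toFun f := ⟨fun i => ∑' j, K i j * f j, memℓp_two_of_summable_norm_sq (hbound f).1⟩
      map_add' f g := lp.ext <| funext fun i => by
        simp only [lp.coeFn_add, Pi.add_apply, mul_add]
        exact ((hrow i).mul_lp two_ne_zero f).tsum_add ((hrow i).mul_lp two_ne_zero g)
      map_smul' c f := lp.ext <| funext fun i => by
        simp only [lp.coeFn_smul, Pi.smul_apply, smul_eq_mul, RingHom.id_apply,
          mul_left_comm _ c]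
        exact tsum_mul_left }
  refine ⟨T.mkContinuous √(max A 0 * B) fun f => ?_, fun f i => rfl⟩
  rw [← Real.sqrt_sq (norm_nonneg (T f)), ← Real.sqrt_sq (norm_nonneg f), ← Real.sqrt_mul']
  · exact Real.sqrt_le_sqrt ((lp.norm_sq_eq_tsum (T f)).trans_le (hbound f).2)
  · positivity

end SchurTest

theorem ContinuousLinearMap.isSelfAdjoint_of_apply_lp_single {ι 𝕜 : Type*} [RCLike 𝕜]
    [DecidableEq ι] {T : lp (fun _ : ι => 𝕜) 2 →L[𝕜] lp (fun _ : ι => 𝕜) 2}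
    (hT : ∀ i j, T (lp.single 2 i 1) j = conj (T (lp.single 2 j 1) i)) : IsSelfAdjoint T := by
  refine lp.ext_continuousLinearMap ENNReal.ofNat_ne_top fun i => ?_
  refine ContinuousLinearMap.ext_ring (lp.ext <| funext fun j => ?_)
  simp only [ContinuousLinearMap.comp_apply, lp.singleContinuousLinearMap_apply]
  rw [← lp.inner_single_one_left, ContinuousLinearMap.star_eq_adjoint,
    ContinuousLinearMap.adjoint_inner_right, ← inner_conj_symm, lp.inner_single_one_left, hT]
  exact RCLike.conj_conj _

theorem stmt8_general {V : Type*} [DecidableEq V] (L : V → V → ℂ)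
    (hL : ∀ u v : V, L u v = starRingEnd ℂ (L v u))
    (C : ℝ)
    (hsum : ∀ u : V, Summable fun v => ‖L u v‖)
    (hbd : ∀ u : V, (∑' v, ‖L u v‖) ≤ C) :
    ∃ M : lp (fun _ : V => ℂ) 2 →L[ℂ] lp (fun _ : V => ℂ) 2,
      (∀ f g : lp (fun _ : V => ℂ) 2, (inner ℂ (M f) g : ℂ) = inner ℂ f (M g)) ∧
      ∀ x y : V, (inner ℂ (lp.single 2 y (1 : ℂ)) (M (lp.single 2 x (1 : ℂ))) : ℂ) = L x y := by
  have hnorm u v : ‖L u v‖ = ‖L v u‖ := by rw [hL u v, Complex.norm_conj]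
  obtain ⟨M, hM⟩ := exists_lp_two_clm_apply_eq_tsum (K := fun u w => L w u)
    (fun u => (hsum u).congr (hnorm u)) (fun u => (tsum_congr (hnorm u)).symm.trans_le (hbd u))
    hsum hbd
  have hM_single x y : M (lp.single 2 x 1) y = L x y := by
    rw [hM, tsum_eq_single x fun w hw => by simp [Pi.single_eq_of_ne hw]]
    simp
  refine ⟨M, (ContinuousLinearMap.isSelfAdjoint_of_apply_lp_single fun x y => ?_).isSymmetric,
    fun x y => by rw [lp.inner_single_one_left, hM_single]⟩
  rw [hM_single, hM_single, hL]

/-- A self-involutive label function `L : V → V → ℂ` with uniformly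
`ℓ¹`-bounded rows defines a bounded self-adjoint Markov-type operator `M` on `ℓ²(V; ℂ)`
with `⟨M δ_x, δ_y⟩ = L x y` (inner products here in the mathematical convention:
`⟨f, g⟩ = ∑ f x * conj (g x)`, so `⟨M δ_x, δ_y⟩` is written `inner δ_y (M δ_x)`). -/
theorem stmt8 {V : Type*} [Countable V] [DecidableEq V] (L : V → V → ℂ)
    (hL : ∀ u v : V, L u v = starRingEnd ℂ (L v u))
    (C : ℝ)
    (hsum : ∀ u : V, Summable fun v => ‖L u v‖)
    (hbd : ∀ u : V, (∑' v, ‖L u v‖) ≤ C) :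
    ∃ M : lp (fun _ : V => ℂ) 2 →L[ℂ] lp (fun _ : V => ℂ) 2,
      (∀ f g : lp (fun _ : V => ℂ) 2, (inner ℂ (M f) g : ℂ) = inner ℂ f (M g)) ∧
      ∀ x y : V, (inner ℂ (lp.single 2 y (1 : ℂ)) (M (lp.single 2 x (1 : ℂ))) : ℂ) = L x y :=
  stmt8_general L hL C hsum hbd
end

section
/- Let G be a group with a nested sequence of normal subgroups K_n (K_{n+1} ⊆ K_n, each normal in G) with ⋂_n K_n = {1}, let π_n : ℂ[G] → ℂ[G/K_n] be the induced ring homomorphism of complex group algebras, and let z ∈ ℂ[G]. Then for every k ∈ ℕ there exists N ∈ ℕ such that for all n ≥ N, the coefficient of the identity element of G/K_n in (π_n z)^k equals the coefficient of the identity element of G in z^k. -/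
/-! Only finitely many elements of `G` occur in `z ^ k`, and each of them other than `1` lies
outside `K n` for all large `n`. From then on `1` is the only element of the support of `z ^ k`
mapping to the identity of `G ⧸ K n`, so `π_n` preserves the identity coefficient of `z ^ k`,
and `π_n (z ^ k) = (π_n z) ^ k`. -/

theorem Finsupp.mapDomain_apply_of_unique_preimage {α β M : Type*} [AddCommMonoid M]
    {f : α → β} {x : α →₀ M} {a : α} (h : ∀ i ∈ x.support, f i = f a → i = a) :
    x.mapDomain f (f a) = x a := by
  classical
  rw [mapDomain_apply_eq_sum]
  refine Finset.sum_eq_single a (fun i hi hia => ?_) fun ha => ?_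
  · obtain ⟨hi, hfi⟩ := Finset.mem_filter.mp hi
    exact (hia (h i hi hfi)).elim
  · simpa using ha

theorem Subgroup.eventually_forall_mem_eq_one_of_iInf_eq_bot {G ι : Type*} [Group G]
    [Preorder ι] {K : ι → Subgroup G} (hK : Antitone K) (htriv : (⨅ i, K i) = ⊥)
    (s : Finset G) : ∀ᶠ i in Filter.atTop, ∀ g ∈ s, g ∈ K i → g = 1 := by
  refine (Filter.eventually_all_finset s).2 fun g _ => ?_
  by_cases hg : g = 1
  · exact .of_forall fun _ _ => hg
  obtain ⟨m, hm⟩ : ∃ m, g ∉ K m := by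
    by_contra! h
    exact hg (Subgroup.mem_bot.mp (htriv ▸ Subgroup.mem_iInf.mpr h))
  exact (Filter.eventually_ge_atTop m).mono fun n hn hgn => (hm (hK hn hgn)).elim

/-- For nested normal subgroups `K_n` with trivial intersection and
`z ∈ ℂ[G]`, for every `k` the identity coefficient of `(π_n z) ^ k` in `ℂ[G/K_n]`
eventually equals the identity coefficient of `z ^ k`. -/
theorem stmt12 {G : Type*} [Group G] (K : ℕ → Subgroup G) [∀ n, (K n).Normal]
    (hnested : ∀ n, K (n + 1) ≤ K n) (htriv : (⨅ n, K n) = ⊥)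
    (z : MonoidAlgebra ℂ G) :
    ∀ k : ℕ, ∃ N : ℕ, ∀ n ≥ N,
      ((MonoidAlgebra.mapDomainRingHom ℂ (QuotientGroup.mk' (K n)) z) ^ k).coeff 1
        = (z ^ k).coeff 1 := by
  intro k
  obtain ⟨N, hN⟩ := Filter.eventually_atTop.1 <|
    Subgroup.eventually_forall_mem_eq_one_of_iInf_eq_bot (antitone_nat_of_succ_le hnested) htriv
      (z ^ k).coeff.support
  refine ⟨N, fun n hn => ?_⟩
  rw [← map_pow, MonoidAlgebra.mapDomainRingHom_apply]
  exact Finsupp.mapDomain_apply_of_unique_preimage fun g hg hg1 =>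
    hN n hn g hg ((QuotientGroup.eq_one_iff g).mp hg1)
end
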